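/- Let (f_n)_{n∈ℤ} be a family of C^∞ functions f_n : ℝ → ℝ with f_0 ≡ 1, and suppose the vector fields L_n = f_n ∂_t on ℝ form a realization of the Witt algebra, i.e. f_m·f_n′ − f_n·f_m′ = (m−n)f_{m+n} for all m, n ∈ ℤ. Then there exists a nonzero real constant c such that f_n(t) = cⁿ e^{−nt} for all n ∈ ℤ and t ∈ ℝ. (This is the content of Case 1 of the proof of Theorem 1 and of Theorem 2: a realization of the Witt algebra on ℝ with L_0 = ∂_t is, up to the scaling constant c, the canonical one.) -/

import Mathlib

/-!
Evaluating the Witt relation at `m = 0` gives `f_n' = -n f_n`, so `f_n(t) = f_n(0) e^{-nt}`.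
Evaluating it at `t = 0` then shows that `C n := f_n(0)` satisfies `C (m + n) = C m * C n`
whenever `m ≠ n`, and such a function with `C 0 = 1` is `n ↦ (C 1) ^ n`.
-/

open Real

theorem eq_mul_exp_of_hasDerivAt {f : ℝ → ℝ} {a : ℝ} (hf : ∀ t, HasDerivAt f (a * f t) t)
    (t : ℝ) : f t = f 0 * exp (a * t) := by
  have hg : ∀ s, HasDerivAt (fun s => f s * exp (-a * s)) 0 s := by
    intro s
    have hexp : HasDerivAt (fun s => exp (-a * s)) (exp (-a * s) * -a) s := by
      simpa using ((hasDerivAt_id s).const_mul (-a)).exp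
    exact ((hf s).mul hexp).congr_deriv (by ring)
  have hconst := is_const_of_deriv_eq_zero (fun s => (hg s).differentiableAt)
    (fun s => (hg s).deriv) t 0
  simp only [mul_zero, exp_zero, mul_one] at hconst
  rw [← hconst, mul_assoc, ← exp_add]
  simp

section MulOnDistinct

variable {G₀ : Type*} [CommGroupWithZero G₀] {C : ℤ → G₀}

theorem apply_ne_zero_of_mul_of_ne (h0 : C 0 = 1)
    (hC : ∀ m n, m ≠ n → C (m + n) = C m * C n) (n : ℤ) : C n ≠ 0 := by
  rcases eq_or_ne n 0 with rfl | hn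
  · simp [h0]
  · have h := hC n (-n) (by omega)
    rw [add_neg_cancel, h0] at h
    exact left_ne_zero_of_mul_eq_one h.symm

/-- `2 = 1 + 1` is the one decomposition of a positive integer not reached by `hC`;
`C 2` is recovered from `C 5 = C 2 * C 3 = C 1 * C 1 * C 3`. -/
theorem apply_two_eq_sq_of_mul_of_ne (h0 : C 0 = 1)
    (hC : ∀ m n, m ≠ n → C (m + n) = C m * C n) : C 2 = C 1 ^ 2 := by
  have h5 : C 2 * C 3 = C 1 ^ 2 * C 3 :=
    calc C 2 * C 3 = C 5 := (hC 2 3 (by decide)).symm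
      _ = C 1 * C 4 := hC 1 4 (by decide)
      _ = C 1 ^ 2 * C 3 := by rw [sq, mul_assoc, ← hC 1 3 (by decide)]; rfl
  exact mul_right_cancel₀ (apply_ne_zero_of_mul_of_ne h0 hC 3) h5

theorem apply_natCast_eq_pow_of_mul_of_ne (h0 : C 0 = 1)
    (hC : ∀ m n, m ≠ n → C (m + n) = C m * C n) (k : ℕ) : C k = C 1 ^ k := by
  induction k with
  | zero => simpa using h0
  | succ k ih =>
    rcases eq_or_ne k 1 with rfl | hk
    · simpa using apply_two_eq_sq_of_mul_of_ne h0 hC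
    · rw [Nat.cast_succ, hC k 1 (by omega), ih, pow_succ]

theorem eq_zpow_of_mul_of_ne (h0 : C 0 = 1)
    (hC : ∀ m n, m ≠ n → C (m + n) = C m * C n) (n : ℤ) : C n = C 1 ^ n := by
  obtain ⟨k, rfl | rfl⟩ := n.eq_nat_or_neg
  · rw [apply_natCast_eq_pow_of_mul_of_ne h0 hC, zpow_natCast]
  · rcases eq_or_ne k 0 with rfl | hk
    · simpa using h0
    · have h := hC (-k) k (by omega)
      rw [neg_add_cancel, h0, apply_natCast_eq_pow_of_mul_of_ne h0 hC] at h
      rw [zpow_neg, zpow_natCast]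
      exact eq_inv_of_mul_eq_one_left h.symm

end MulOnDistinct

theorem witt_realization_R1_unique (f : ℤ → ℝ → ℝ)
    (hsmooth : ∀ n : ℤ, ContDiff ℝ (⊤ : ℕ∞) (f n))
    (h0 : ∀ t : ℝ, f 0 t = 1)
    (hW : ∀ m n : ℤ, ∀ t : ℝ,
      f m t * deriv (f n) t - f n t * deriv (f m) t = ((m : ℝ) - (n : ℝ)) * f (m + n) t) :
    ∃ c : ℝ, c ≠ 0 ∧ ∀ n : ℤ, ∀ t : ℝ, f n t = c ^ n * Real.exp (-(n : ℝ) * t) := by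
  have hderiv : ∀ n t, deriv (f n) t = -n * f n t := fun n t => by
    simpa only [funext h0, deriv_const, one_mul, mul_zero, sub_zero, Int.cast_zero, zero_sub,
      zero_add] using hW 0 n t
  have hexp : ∀ n t, f n t = f n 0 * exp (-n * t) := fun n =>
    eq_mul_exp_of_hasDerivAt fun t =>
      hderiv n t ▸ ((hsmooth n).differentiable (by simp) t).hasDerivAt
  have hmul : ∀ m n : ℤ, m ≠ n → f (m + n) 0 = f m 0 * f n 0 := by
    intro m n hmn
    have h := hW m n 0
    rw [hderiv, hderiv] at h
    have hmn' : (m : ℝ) - n ≠ 0 := sub_ne_zero.mpr (mod_cast hmn)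
    exact mul_left_cancel₀ hmn' (by linear_combination -h)
  refine ⟨f 1 0, apply_ne_zero_of_mul_of_ne (C := fun n => f n 0) (h0 0) hmul 1, fun n t => ?_⟩
  rw [hexp, eq_zpow_of_mul_of_ne (C := fun n => f n 0) (h0 0) hmul n]
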